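/- arXiv:1312.3819 — 8 statements merged into one kernel-verified Lean document; each statement's English description precedes it below -/
import Mathlib

section
/- Let f(z) = Σ f_ν z^ν be the unique formal power series solution of α z^s f(z) = P(z) f(qz) + Q(z), where |q| > 1, P(0) ≠ 0. Then there exists a constant C₁ > 0 (depending only on s, q, α, P, Q) such that |f_ν| ≤ C₁^{ν+1} for all ν ≥ 0; in particular, f has a positive radius of convergence. -/
/-- The coefficients of the formal power series solution of
`α z^s f(z) = P(z) f(qz) + Q(z)` satisfy `|f_ν| ≤ C₁^{ν+1}` for some `C₁ > 0`;
in particular the power series has a positive radius of convergence. -/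
theorem stmt1 (q : ℂ) (hq : 1 < ‖q‖) (s : ℕ) (hs : 0 < s)
    (P Q : Polynomial ℂ) (hP0 : P.coeff 0 ≠ 0) (hQ : Q ≠ 0)
    (α : ℂ) (hα : α ≠ 0) (t : ℕ) (ht : P.natDegree = t)
    (f : ℤ → ℂ) (hneg : ∀ ν : ℤ, ν < 0 → f ν = 0)
    (hrec : ∀ ν : ℤ, 0 ≤ ν →
      P.coeff 0 * q ^ ν * f ν =
        α * f (ν - s)
          - ∑ i ∈ Finset.Icc 1 t, P.coeff i * q ^ (ν - (i : ℤ)) * f (ν - (i : ℤ))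
          - Q.coeff ν.toNat) :
    (∃ C₁ : ℝ, 0 < C₁ ∧ ∀ ν : ℕ, ‖f ν‖ ≤ C₁ ^ (ν + 1)) ∧
      ∃ r : ℝ, 0 < r ∧ Summable (fun ν : ℕ => ‖f ν‖ * r ^ ν) := by
  set P0 : ℝ := ‖P.coeff 0‖ with hP0def
  have hP0pos : 0 < P0 := (norm_pos_iff.mpr hP0)
  set Qm : ℝ := ∑ i ∈ Q.support, ‖Q.coeff i‖ with hQmdef
  have hQm0 : 0 ≤ Qm := Finset.sum_nonneg fun i _ => norm_nonneg _
  have hQm : ∀ n : ℕ, ‖Q.coeff n‖ ≤ Qm := by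
    intro n
    by_cases hn : n ∈ Q.support
    · exact Finset.single_le_sum (fun i _ => norm_nonneg _) hn
    · simp only [Polynomial.mem_support_iff, not_not] at hn
      simp [hn, hQm0]
  set S : ℝ := ‖α‖ + (∑ i ∈ Finset.Icc 1 t, ‖P.coeff i‖) + Qm
    with hSdef
  have hS0 : 0 ≤ S :=
    add_nonneg (add_nonneg (norm_nonneg α)
      (Finset.sum_nonneg fun i _ => norm_nonneg _)) hQm0
  set C : ℝ := max 1 (S / P0) with hCdef
  have hC1 : (1:ℝ) ≤ C := le_max_left _ _
  have hC0 : (0:ℝ) < C := lt_of_lt_of_le one_pos hC1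
  have hCS : S / P0 ≤ C := le_max_right _ _
  have hq1 : (1:ℝ) ≤ ‖q‖ := le_of_lt hq
  have hq0 : (0:ℝ) < ‖q‖ := lt_trans one_pos hq
  have key : ∀ ν : ℕ, ‖f ν‖ ≤ C ^ (ν + 1) := by
    intro ν
    induction ν using Nat.strong_induction_on with
    | _ ν IH =>
      have hCν1 : (1:ℝ) ≤ C ^ ν := one_le_pow₀ hC1
      have hqν1 : (1:ℝ) ≤ ‖q‖ ^ ν := one_le_pow₀ hq1
      have hf_le : ∀ m : ℤ, m < (ν:ℤ) → ‖f m‖ ≤ C ^ ν := by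
        intro m hm
        rcases lt_or_ge m 0 with h | h
        · rw [hneg m h]
          simpa using le_trans zero_le_one hCν1
        · lift m to ℕ using h
          have hm' : m < ν := by exact_mod_cast hm
          calc ‖f m‖ ≤ C ^ (m + 1) := IH m hm'
            _ ≤ C ^ ν := pow_le_pow_right₀ hC1 (by omega)
      have hrecν := hrec ν (by positivity)
      have habs : P0 * ‖q‖ ^ ν * ‖f ν‖
          = ‖P.coeff 0 * q ^ (ν:ℤ) * f ν‖ := by
        rw [norm_mul, norm_mul, norm_zpow]
        norm_num [hP0def]
      have hbound : ‖P.coeff 0 * q ^ (ν:ℤ) * f ν‖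
          ≤ S * (‖q‖ ^ ν * C ^ ν) := by
        rw [hrecν]
        have h1 : ‖α * f ((ν:ℤ) - s)‖
            ≤ ‖α‖ * (‖q‖ ^ ν * C ^ ν) := by
          rw [norm_mul]
          have : ‖f ((ν:ℤ) - s)‖ ≤ C ^ ν := by
            apply hf_le
            omega
          calc ‖α‖ * ‖f ((ν:ℤ) - s)‖
              ≤ ‖α‖ * C ^ ν := by
                exact mul_le_mul_of_nonneg_left this (norm_nonneg _)
            _ ≤ ‖α‖ * (‖q‖ ^ ν * C ^ ν) := by
                nlinarith [mul_nonneg (mul_nonneg (norm_nonneg α)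
                  (le_of_lt (pow_pos hC0 ν))) (sub_nonneg.mpr hqν1)]
        have h2 : ‖∑ i ∈ Finset.Icc 1 t,
              P.coeff i * q ^ ((ν:ℤ) - (i:ℤ)) * f ((ν:ℤ) - (i:ℤ))‖
            ≤ (∑ i ∈ Finset.Icc 1 t, ‖P.coeff i‖)
              * (‖q‖ ^ ν * C ^ ν) := by
          calc ‖∑ i ∈ Finset.Icc 1 t,
                P.coeff i * q ^ ((ν:ℤ) - (i:ℤ)) * f ((ν:ℤ) - (i:ℤ))‖
              ≤ ∑ i ∈ Finset.Icc 1 t,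
                ‖P.coeff i * q ^ ((ν:ℤ) - (i:ℤ)) * f ((ν:ℤ) - (i:ℤ))‖ := by
                exact norm_sum_le _ _
            _ ≤ ∑ i ∈ Finset.Icc 1 t,
                ‖P.coeff i‖ * (‖q‖ ^ ν * C ^ ν) := by
                apply Finset.sum_le_sum
                intro i hi
                simp only [Finset.mem_Icc] at hi
                rw [norm_mul, norm_mul, norm_zpow, mul_assoc]
                apply mul_le_mul_of_nonneg_left _ (norm_nonneg _)
                have hqle : ‖q‖ ^ ((ν:ℤ) - (i:ℤ)) ≤ ‖q‖ ^ ν := by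
                  have := zpow_le_zpow_right₀ hq1 (show (ν:ℤ) - (i:ℤ) ≤ (ν:ℤ) by omega)
                  simpa using this
                have hfle : ‖f ((ν:ℤ) - (i:ℤ))‖ ≤ C ^ ν := by
                  apply hf_le; omega
                have hz0 : (0:ℝ) ≤ ‖q‖ ^ ((ν:ℤ) - (i:ℤ)) :=
                  le_of_lt (zpow_pos hq0 _)
                exact mul_le_mul hqle hfle (norm_nonneg _)
                  (le_of_lt (pow_pos hq0 ν))
            _ = _ := by rw [← Finset.sum_mul]
        have h3 : ‖Q.coeff (ν:ℤ).toNat‖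
            ≤ Qm * (‖q‖ ^ ν * C ^ ν) := by
          calc ‖Q.coeff (ν:ℤ).toNat‖ ≤ Qm := hQm _
            _ ≤ Qm * (‖q‖ ^ ν * C ^ ν) := by
                have h1 : (1:ℝ) ≤ ‖q‖ ^ ν * C ^ ν := by nlinarith
                exact le_mul_of_one_le_right hQm0 h1
        calc ‖α * f ((ν:ℤ) - s)
              - ∑ i ∈ Finset.Icc 1 t, P.coeff i * q ^ ((ν:ℤ) - (i:ℤ)) * f ((ν:ℤ) - (i:ℤ))
              - Q.coeff (ν:ℤ).toNat‖
            ≤ ‖α * f ((ν:ℤ) - s)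
              - ∑ i ∈ Finset.Icc 1 t, P.coeff i * q ^ ((ν:ℤ) - (i:ℤ)) * f ((ν:ℤ) - (i:ℤ))‖
              + ‖Q.coeff (ν:ℤ).toNat‖ := norm_sub_le _ _
          _ ≤ ‖α * f ((ν:ℤ) - s)‖
              + ‖∑ i ∈ Finset.Icc 1 t,
                  P.coeff i * q ^ ((ν:ℤ) - (i:ℤ)) * f ((ν:ℤ) - (i:ℤ))‖
              + ‖Q.coeff (ν:ℤ).toNat‖ := by
                gcongr
                exact norm_sub_le _ _
          _ ≤ ‖α‖ * (‖q‖ ^ ν * C ^ ν)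
              + (∑ i ∈ Finset.Icc 1 t, ‖P.coeff i‖)
                * (‖q‖ ^ ν * C ^ ν)
              + Qm * (‖q‖ ^ ν * C ^ ν) :=
                add_le_add (add_le_add h1 h2) h3
          _ = S * (‖q‖ ^ ν * C ^ ν) := by rw [hSdef]; ring
      have hmain : P0 * ‖q‖ ^ ν * ‖f ν‖
          ≤ S * (‖q‖ ^ ν * C ^ ν) := habs ▸ hbound
      have hfν : ‖f ν‖ ≤ (S / P0) * C ^ ν := by
        have hqνpos : (0:ℝ) < ‖q‖ ^ ν := pow_pos hq0 ν
        rw [div_mul_eq_mul_div, le_div_iff₀ hP0pos]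
        nlinarith [norm_nonneg (f ν)]
      calc ‖f ν‖ ≤ (S / P0) * C ^ ν := hfν
        _ ≤ C * C ^ ν := by
            apply mul_le_mul_of_nonneg_right hCS (le_of_lt (pow_pos hC0 ν))
        _ = C ^ (ν + 1) := by ring
  refine ⟨⟨C, hC0, key⟩, 1 / (2 * C), by positivity, ?_⟩
  apply Summable.of_nonneg_of_le (fun ν => ?_) (fun ν => ?_)
    (Summable.mul_left C (summable_geometric_of_lt_one (by norm_num) (by norm_num :
      (1:ℝ)/2 < 1)))
  · positivity
  · calc ‖f ν‖ * (1 / (2 * C)) ^ ν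
        ≤ C ^ (ν + 1) * (1 / (2 * C)) ^ ν := by
          apply mul_le_mul_of_nonneg_right (key ν)
          positivity
      _ = C * ((1:ℝ)/2) ^ ν := by
          rw [pow_succ]
          field_simp
          ring_nf
          rw [← mul_pow, mul_inv_cancel₀ hC0.ne', one_pow, one_mul]
end

section
/- Let f be an analytic solution of α z^s f(z) = P(z) f(qz) + Q(z) in a neighbourhood of 0, with |q| > 1, s ≥ 1, deg P ≤ s, P(0) ≠ 0. Then for z avoiding the points q^k β with P(β) = 0 and k ≥ 1, f extends meromorphically via f(z) = −Σ_{i=1}^{∞} q^{−s i(i−1)/2} Q(z q^{−i}) (α z^s)^{i−1} / (P(z q^{−1}) ⋯ P(z q^{−i})), and this series converges. -/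
open Finset Filter

/-- meromorphic continuation of an analytic solution of
`α z^s f(z) = P(z) f(qz) + Q(z)`.  For every `z` avoiding the points `q^k β`
with `P β = 0`, `k ≥ 1` (equivalently `P(z q^{-k}) ≠ 0` for all `k ≥ 1`),
the series `−Σ_{i≥1} q^{−s i(i−1)/2} Q(z q^{−i}) (α z^s)^{i−1} / (P(zq^{−1})⋯P(zq^{−i}))`
converges, and on the disc where `f` is analytic it sums to `f z`.
(The index `n : ℕ` below corresponds to `i = n + 1` in the paper.) -/
theorem stmt2 (q : ℂ) (hq : 1 < ‖q‖) (s : ℕ) (hs : 0 < s)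
    (P Q : Polynomial ℂ) (hP0 : P.coeff 0 ≠ 0) (hdeg : P.natDegree ≤ s)
    (α : ℂ) (hα : α ≠ 0)
    (r : ℝ) (hr : 0 < r) (f : ℂ → ℂ)
    (hf : AnalyticOnNhd ℂ f (Metric.ball 0 r))
    (hfe : ∀ w : ℂ, ‖q * w‖ < r →
      α * w ^ s * f w = P.eval w * f (q * w) + Q.eval w) :
    ∀ z : ℂ, (∀ k : ℕ, 1 ≤ k → P.eval (z * q ^ (-(k : ℤ))) ≠ 0) →
      Summable (fun n : ℕ =>
        -((q ^ (s * ((n + 1) * n / 2)))⁻¹ * Q.eval (z * q ^ (-(n + 1 : ℤ)))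
            * (α * z ^ s) ^ n
            / ∏ j ∈ Finset.Icc 1 (n + 1), P.eval (z * q ^ (-(j : ℤ))))) ∧
      (‖z‖ < r →
        HasSum (fun n : ℕ =>
          -((q ^ (s * ((n + 1) * n / 2)))⁻¹ * Q.eval (z * q ^ (-(n + 1 : ℤ)))
              * (α * z ^ s) ^ n
              / ∏ j ∈ Finset.Icc 1 (n + 1), P.eval (z * q ^ (-(j : ℤ))))) (f z)) := by
  intro z hz
  have hq0 : q ≠ 0 := by
    intro h
    rw [h] at hq
    simp at hq
    linarith
  obtain ⟨u, hudef⟩ : ∃ u : ℕ → ℂ, u = fun i : ℕ => z * q ^ (-(i : ℤ)) := ⟨_, rfl⟩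
  obtain ⟨a, hadef⟩ : ∃ a : ℕ → ℂ, a = fun n : ℕ =>
      -((q ^ (s * ((n + 1) * n / 2)))⁻¹ * Q.eval (z * q ^ (-(n + 1 : ℤ)))
          * (α * z ^ s) ^ n
          / ∏ j ∈ Finset.Icc 1 (n + 1), P.eval (z * q ^ (-(j : ℤ)))) := ⟨_, rfl⟩
  rw [← hadef]
  have huinv : ∀ i : ℕ, u i = z * (q⁻¹) ^ i := by
    intro i
    simp [hudef, zpow_neg, zpow_natCast, inv_pow]
  have hu0 : u 0 = z := by simp [huinv]
  have hustep : ∀ k : ℕ, q * u (k + 1) = u k := by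
    intro k
    rw [huinv, huinv, pow_succ]
    field_simp
  have habs : ∀ i, ‖u i‖ ≤ ‖z‖ := by
    intro i
    rw [huinv, norm_mul, norm_pow, norm_inv]
    have h1 : (‖q‖⁻¹) ^ i ≤ 1 := by
      apply pow_le_one₀ (by positivity)
      rw [inv_le_one_iff₀]
      right; linarith
    calc ‖z‖ * (‖q‖)⁻¹ ^ i ≤ ‖z‖ * 1 :=
          mul_le_mul_of_nonneg_left h1 (norm_nonneg z)
      _ = ‖z‖ := mul_one _
  have hulim : Tendsto u atTop (nhds 0) := by
    have h1 : Tendsto (fun i : ℕ => (q⁻¹) ^ i) atTop (nhds 0) := by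
      apply tendsto_pow_atTop_nhds_zero_of_norm_lt_one
      rw [norm_inv, inv_lt_one_iff₀]
      right; exact hq
    have h2 : u = fun i => z * (q⁻¹) ^ i := funext huinv
    rw [h2]
    simpa using h1.const_mul z
  have hPu : ∀ j : ℕ, 1 ≤ j → P.eval (u j) ≠ 0 := by
    intro j hj
    simp only [hudef]
    exact hz j hj
  have hP0' : P.eval 0 ≠ 0 := by rwa [← Polynomial.coeff_zero_eq_eval_zero]
  have hPlim : Tendsto (fun j => P.eval (u j)) atTop (nhds (P.eval 0)) :=
    ((Polynomial.continuous P).tendsto 0).comp hulim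
  -- lower bound on |P(u j)|
  obtain ⟨c, hc0, hcle⟩ : ∃ c : ℝ, 0 < c ∧ ∀ j : ℕ, 1 ≤ j → c ≤ ‖P.eval (u j)‖ := by
    have habs0 : 0 < ‖P.eval 0‖ := norm_pos_iff.2 hP0'
    have h2 : Tendsto (fun j => ‖P.eval (u j)‖) atTop
        (nhds (‖P.eval 0‖)) := (continuous_norm.tendsto _).comp hPlim
    have h3 : ∀ᶠ j in atTop, ‖P.eval 0‖ / 2 ≤ ‖P.eval (u j)‖ :=
      h2.eventually (eventually_ge_nhds (by linarith))
    obtain ⟨N, hN⟩ := eventually_atTop.1 h3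
    set F : Finset ℝ := insert (‖P.eval 0‖ / 2)
      ((Finset.Icc 1 N).image (fun j => ‖P.eval (u j)‖)) with hF
    have hFne : F.Nonempty := ⟨_, Finset.mem_insert_self _ _⟩
    have hall : ∀ x ∈ F, 0 < x := by
      intro x hx
      rw [hF] at hx
      rcases Finset.mem_insert.1 hx with h | h
      · rw [h]; linarith
      · obtain ⟨j, hj, hje⟩ := Finset.mem_image.1 h
        rw [← hje]
        exact norm_pos_iff.2 (hPu j (Finset.mem_Icc.1 hj).1)
    refine ⟨F.min' hFne, hall _ (F.min'_mem hFne), ?_⟩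
    intro j hj
    by_cases hjN : j ≤ N
    · apply Finset.min'_le
      rw [hF]
      exact Finset.mem_insert_of_mem
        (Finset.mem_image.2 ⟨j, Finset.mem_Icc.2 ⟨hj, hjN⟩, rfl⟩)
    · calc F.min' hFne ≤ ‖P.eval 0‖ / 2 :=
            Finset.min'_le _ _ (Finset.mem_insert_self _ _)
        _ ≤ ‖P.eval (u j)‖ := hN j (by omega)
  -- upper bound on |Q(u n)|
  obtain ⟨C, hC⟩ : ∃ C : ℝ, ∀ n : ℕ, ‖Q.eval (u n)‖ ≤ C := by
    have h2 : Tendsto (fun j => ‖Q.eval (u j)‖) atTop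
        (nhds (‖Q.eval 0‖)) :=
      (continuous_norm.tendsto _).comp (((Polynomial.continuous Q).tendsto 0).comp hulim)
    obtain ⟨C, hC⟩ := h2.bddAbove_range
    exact ⟨C, fun n => hC (Set.mem_range_self n)⟩
  have hC0 : 0 ≤ C := le_trans (norm_nonneg _) (hC 0)
  -- the factor and partial products
  obtain ⟨g, hgdef⟩ : ∃ g : ℕ → ℂ, g = fun i : ℕ => α * u i ^ s / P.eval (u i) := ⟨_, rfl⟩
  obtain ⟨G, hGdef⟩ : ∃ G : ℕ → ℂ, G = fun k : ℕ => ∏ i ∈ Finset.Icc 1 k, g i := ⟨_, rfl⟩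
  have hGstep : ∀ k : ℕ, G (k + 1) = G k * g (k + 1) := by
    intro k
    simp only [hGdef]
    exact Finset.prod_Icc_succ_top (by omega) g
  -- Gauss sum
  have htri : ∀ k : ℕ, (∑ i ∈ Finset.Icc 1 k, i) * 2 = (k + 1) * k := by
    intro k
    induction k with
    | zero => simp
    | succ k ih =>
      calc (∑ i ∈ Finset.Icc 1 (k + 1), i) * 2
          = (∑ i ∈ Finset.Icc 1 k, i) * 2 + (k + 1) * 2 := by
            rw [Finset.sum_Icc_succ_top (by omega)]; ring
        _ = (k + 1) * k + (k + 1) * 2 := by rw [ih]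
        _ = (k + 1 + 1) * (k + 1) := by ring
  have hdiv : ∀ k : ℕ, (k + 1) * k / 2 = ∑ i ∈ Finset.Icc 1 k, i := by
    intro k
    have h1 := htri k
    obtain ⟨m, hm⟩ : ∃ m, (k + 1) * k = m := ⟨_, rfl⟩
    rw [hm] at h1 ⊢
    omega
  -- closed form of the partial product
  have hGnum : ∀ k : ℕ, ∏ i ∈ Finset.Icc 1 k, (α * u i ^ s)
      = (α * z ^ s) ^ k * ((q ^ (s * ((k + 1) * k / 2)))⁻¹ : ℂ) := by
    intro k
    calc ∏ i ∈ Finset.Icc 1 k, (α * u i ^ s)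
        = ∏ i ∈ Finset.Icc 1 k, ((α * z ^ s) * ((q⁻¹) ^ s) ^ i) := by
          apply Finset.prod_congr rfl
          intro i _
          rw [huinv, mul_pow, ← pow_mul, mul_comm i s, pow_mul]
          ring
      _ = (α * z ^ s) ^ (Finset.Icc 1 k).card * ((q⁻¹) ^ s) ^ (∑ i ∈ Finset.Icc 1 k, i) := by
          rw [Finset.prod_mul_distrib, Finset.prod_const, Finset.prod_pow_eq_pow_sum]
      _ = (α * z ^ s) ^ k * ((q ^ (s * ((k + 1) * k / 2)))⁻¹ : ℂ) := by
          rw [Nat.card_Icc, hdiv k, ← inv_pow, ← pow_mul]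
          norm_num
  have hprodP : ∀ k : ℕ, (∏ i ∈ Finset.Icc 1 k, P.eval (u i)) ≠ 0 := by
    intro k
    exact Finset.prod_ne_zero_iff.2 fun i hi => hPu i (Finset.mem_Icc.1 hi).1
  have hGeq : ∀ k : ℕ, G k = (α * z ^ s) ^ k * ((q ^ (s * ((k + 1) * k / 2)))⁻¹ : ℂ)
      / ∏ i ∈ Finset.Icc 1 k, P.eval (u i) := by
    intro k
    simp only [hGdef, hgdef]
    rw [Finset.prod_div_distrib, hGnum]
  -- the series terms in terms of G
  have ha_eq : ∀ n : ℕ, a n = -(G n * (Q.eval (u (n + 1)) / P.eval (u (n + 1)))) := by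
    intro n
    have hcast : (-(↑n + 1) : ℤ) = -((n + 1 : ℕ) : ℤ) := by push_cast; ring
    have hsplit : ∏ j ∈ Finset.Icc 1 (n + 1), P.eval (u j)
        = (∏ i ∈ Finset.Icc 1 n, P.eval (u i)) * P.eval (u (n + 1)) :=
      Finset.prod_Icc_succ_top (by omega) _
    have h1 : P.eval (u (n + 1)) ≠ 0 := hPu (n + 1) (by omega)
    have h2 := hprodP n
    have h3 : (q : ℂ) ^ (s * ((n + 1) * n / 2)) ≠ 0 := pow_ne_zero _ hq0
    simp only [hudef] at hsplit h1 h2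
    rw [hGeq]
    simp only [hadef, hcast, hudef]
    rw [hsplit]
    ring
  -- the factors tend to 0
  have hglim : Tendsto g atTop (nhds 0) := by
    have h1 : Tendsto (fun i => α * u i ^ s / P.eval (u i)) atTop
        (nhds (α * (0 : ℂ) ^ s / P.eval 0)) :=
      Tendsto.div ((hulim.pow s).const_mul α) hPlim hP0'
    rw [hgdef]
    simpa [zero_pow hs.ne'] using h1
  obtain ⟨N, hN2⟩ : ∃ N : ℕ, ∀ i, N ≤ i → ‖g i‖ ≤ 1 / 2 := by
    have h2 : Tendsto (fun i => ‖g i‖) atTop (nhds 0) := by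
      simpa using hglim.norm
    exact eventually_atTop.1 (h2.eventually (eventually_le_nhds (by norm_num)))
  set D : ℝ := ‖G N‖ * 2 ^ N with hDdef
  have hD0 : 0 ≤ D := by positivity
  have hDbd : ∀ k : ℕ, N ≤ k → ‖G k‖ ≤ D * (1 / 2) ^ k := by
    intro k hk
    induction k, hk using Nat.le_induction with
    | base =>
      have h1 : D * (1 / 2 : ℝ) ^ N = ‖G N‖ * (2 ^ N * (1 / 2) ^ N) := by
        rw [hDdef]; ring
      rw [h1, ← mul_pow]
      norm_num
    | succ k hk ih =>
      rw [hGstep, norm_mul]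
      calc ‖G k‖ * ‖g (k + 1)‖
          ≤ (D * (1 / 2) ^ k) * (1 / 2) := by
            apply mul_le_mul ih (hN2 (k + 1) (by omega)) (norm_nonneg _)
            positivity
        _ = D * (1 / 2) ^ (k + 1) := by ring
  have hhalf : Tendsto (fun k : ℕ => D * (1 / 2 : ℝ) ^ k) atTop (nhds 0) := by
    have h1 := tendsto_pow_atTop_nhds_zero_of_lt_one (by norm_num : (0:ℝ) ≤ 1/2)
      (by norm_num : (1/2 : ℝ) < 1)
    simpa using h1.const_mul D
  have hGlim : Tendsto G atTop (nhds 0) := by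
    rw [tendsto_zero_iff_norm_tendsto_zero]
    apply squeeze_zero' (Eventually.of_forall fun k => norm_nonneg _) ?_ hhalf
    filter_upwards [eventually_ge_atTop N] with k hk
    simpa using hDbd k hk
  -- summability
  have hsummable : Summable a := by
    apply Summable.of_norm_bounded_eventually_nat (g := fun k => C / c * (D * (1 / 2) ^ k))
    · exact (((summable_geometric_of_lt_one (by norm_num) (by norm_num)).mul_left D)).mul_left _
    · filter_upwards [eventually_ge_atTop N] with k hk
      rw [ha_eq k]
      rw [norm_neg, norm_mul, norm_div]
      have h1 : ‖Q.eval (u (k + 1))‖ / ‖P.eval (u (k + 1))‖ ≤ C / c :=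
        div_le_div₀ hC0 (hC (k + 1)) hc0 (hcle (k + 1) (by omega))
      calc ‖G k‖ * (‖Q.eval (u (k + 1))‖ / ‖P.eval (u (k + 1))‖)
          ≤ (D * (1 / 2) ^ k) * (C / c) := by
            apply mul_le_mul (hDbd k hk) h1 (by positivity) (by positivity)
        _ = C / c * (D * (1 / 2) ^ k) := by ring
  refine ⟨hsummable, fun hzr => ?_⟩
  -- key iteration identity
  have hkey : ∀ k : ℕ, f z = G k * f (u k) + ∑ n ∈ Finset.range k, a n := by
    intro k
    induction k with
    | zero => simp [hGdef, hu0]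
    | succ k ih =>
      have hP' : P.eval (u (k + 1)) ≠ 0 := hPu (k + 1) (by omega)
      have hw : ‖q * u (k + 1)‖ < r := by
        rw [hustep]
        exact lt_of_le_of_lt (habs k) hzr
      have heq := hfe (u (k + 1)) hw
      rw [hustep] at heq
      have hiden : f (u k) = g (k + 1) * f (u (k + 1))
          - Q.eval (u (k + 1)) / P.eval (u (k + 1)) := by
        simp only [hgdef]
        rw [div_mul_eq_mul_div, div_sub_div_same, eq_div_iff hP']
        linear_combination -heq
      rw [Finset.sum_range_succ, ih, hGstep, ha_eq, hiden]
      ring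
  have hflim : Tendsto (fun k => f (u k)) atTop (nhds (f 0)) :=
    ((hf 0 (by simpa using hr)).continuousAt.tendsto).comp hulim
  have h5 : Tendsto (fun k => G k * f (u k)) atTop (nhds 0) := by
    simpa using hGlim.mul hflim
  have h4 : Tendsto (fun k => ∑ n ∈ Finset.range k, a n) atTop (nhds (f z)) := by
    have h6 : (fun k => ∑ n ∈ Finset.range k, a n) = fun k => f z - G k * f (u k) :=
      funext fun k => by rw [hkey k]; ring
    rw [h6]
    simpa using tendsto_const_nhds.sub h5
  have h7 := hsummable.hasSum
  have h8 : ∑' n, a n = f z := tendsto_nhds_unique h7.tendsto_sum_nat h4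
  rwa [h8] at h7
end

section
/- With Q(z) = −P(z), the unique analytic solution f of α z^s f(z) = P(z) f(qz) − P(z) satisfies f(q) = φ(α), where φ(z) = 1 + Σ_{n=1}^{∞} q^{−s n(n−1)/2} z^n / (P(1) P(q^{−1}) ⋯ P(q^{−(n−1)})) is the generalized Heine series. -/
open Finset Filter

private lemma aux1 (E B c D A : ℂ) (hE : E ≠ 0) (hB : B ≠ 0) (hc : c ≠ 0) (hD : D ≠ 0) :
    -((E * B)⁻¹ * (-c) * (A * B) / (D * c)) = E⁻¹ * A / D := by
  field_simp

private lemma aux2 (E B c D A : ℂ) (hE : E ≠ 0) (hB : B ≠ 0) (hc : c ≠ 0) (hD : D ≠ 0) :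
    (E * B)⁻¹ * (A * α) / (D * c) = α * B⁻¹ / c * (E⁻¹ * A / D) := by
  field_simp

/-- With `Q(z) = −P(z)`, the analytic solution
`f(z) = −Σ_{i≥1} q^{−si(i−1)/2} Q(zq^{−i}) (αz^s)^{i−1} / (P(zq^{−1})⋯P(zq^{−i}))`
of `α z^s f(z) = P(z) f(qz) − P(z)` satisfies `f(q) = φ(α)`, where
`φ(z) = 1 + Σ_{n≥1} q^{−sn(n−1)/2} z^n / (P(1)P(q^{−1})⋯P(q^{−(n−1)}))` is the
generalized Heine series.  (Index `n : ℕ` corresponds to `i = n+1`, resp. to the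
`n+1`-st term of `φ`.) -/
theorem stmt3 (q : ℂ) (hq : 1 < ‖q‖) (s : ℕ) (hs : 0 < s)
    (P : Polynomial ℂ) (hdeg : P.natDegree ≤ s) (hP0 : P.coeff 0 ≠ 0)
    (hPk : ∀ k : ℕ, P.eval (q ^ (-(k : ℤ))) ≠ 0)
    (α : ℂ) (hα : α ≠ 0)
    (f : ℂ → ℂ)
    (hf : ∀ z : ℂ, f z =
      -∑' n : ℕ, (q ^ (s * ((n + 1) * n / 2)))⁻¹ * (-(P.eval (z * q ^ (-(n + 1 : ℤ)))))
          * (α * z ^ s) ^ n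
          / ∏ j ∈ Finset.Icc 1 (n + 1), P.eval (z * q ^ (-(j : ℤ)))) :
    f q = 1 + ∑' n : ℕ,
      (q ^ (s * ((n + 1) * n / 2)))⁻¹ * α ^ (n + 1)
        / ∏ j ∈ Finset.range (n + 1), P.eval (q ^ (-(j : ℤ))) := by
  have hq0 : q ≠ 0 := by
    intro h; rw [h] at hq; simp at hq; linarith
  have hqe : ∀ j : ℕ, q * q ^ (-(j + 1 : ℤ)) = q ^ (-(j : ℤ)) := by
    intro j
    rw [show q * q ^ (-(j + 1 : ℤ)) = q ^ ((1 : ℤ) + -(j + 1)) from by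
      rw [zpow_add₀ hq0, zpow_one]]
    congr 1; ring
  have hD : ∀ n : ℕ, (∏ j ∈ Finset.range n, P.eval (q ^ (-(j : ℤ)))) ≠ 0 := fun n =>
    Finset.prod_ne_zero_iff.mpr fun j _ => hPk j
  have hexp : ∀ n : ℕ, s * ((n + 1) * n / 2) = s * (n * (n - 1) / 2) + s * n := by
    intro n
    have h1 : (n + 1) * n = n * (n - 1) + 2 * n := by
      cases n with
      | zero => rfl
      | succ m =>
        show (m + 1 + 1) * (m + 1) = (m + 1) * (m + 1 - 1) + 2 * (m + 1)
        rw [Nat.add_sub_cancel]; ring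
    have h2 : (n + 1) * n / 2 = n * (n - 1) / 2 + n := by
      rw [h1, Nat.add_mul_div_left _ _ (by norm_num : 0 < 2)]
    rw [h2, Nat.mul_add]
  set a : ℕ → ℂ := fun n =>
    (q ^ (s * (n * (n - 1) / 2)))⁻¹ * α ^ n / ∏ j ∈ Finset.range n, P.eval (q ^ (-(j : ℤ)))
    with ha
  have hprod : ∀ n : ℕ, (∏ j ∈ Finset.Icc 1 (n + 1), P.eval (q * q ^ (-(j : ℤ))))
      = ∏ j ∈ Finset.range (n + 1), P.eval (q ^ (-(j : ℤ))) := by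
    intro n
    rw [← Finset.Ico_add_one_right_eq_Icc, Finset.prod_Ico_eq_prod_range]
    refine Finset.prod_congr (by norm_num) fun j _ => ?_
    have h : ((1 + j : ℕ) : ℤ) = (j : ℤ) + 1 := by push_cast; ring
    rw [h, hqe j]
  have hE : ∀ n : ℕ, q ^ (s * (n * (n - 1) / 2)) ≠ 0 := fun n => pow_ne_zero _ hq0
  have hB : ∀ n : ℕ, q ^ (s * n) ≠ 0 := fun n => pow_ne_zero _ hq0
  -- f q = ∑' a n
  have hfq : f q = ∑' n : ℕ, a n := by
    rw [hf q, ← tsum_neg]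
    refine tsum_congr fun n => ?_
    rw [hprod n, hqe n, ha]
    rw [Finset.prod_range_succ, hexp n, pow_add, mul_pow, ← pow_mul]
    exact aux1 _ _ _ _ _ (hE n) (pow_ne_zero _ hq0) (hPk n) (hD n)
  -- ratio relation
  have hrat : ∀ n : ℕ, a (n + 1) = (α * ((q ^ s)⁻¹) ^ n / P.eval (q ^ (-(n : ℤ)))) * a n := by
    intro n
    rw [ha]
    simp only [Nat.add_sub_cancel]
    rw [Finset.prod_range_succ, hexp n, pow_add, inv_pow, ← pow_mul, pow_succ]
    exact aux2 _ _ _ _ _ (hE n) (hB n) (hPk n) (hD n)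
  -- summability
  have hsum : Summable a := by
    apply summable_of_ratio_norm_eventually_le (r := 1/2) (by norm_num)
    have hlt : ‖(q ^ s)⁻¹‖ < 1 := by
      rw [norm_inv, norm_pow, inv_lt_one_iff₀]
      right
      exact one_lt_pow₀ hq hs.ne'
    have h1 : Tendsto (fun n : ℕ => ((q ^ s)⁻¹) ^ n) atTop (nhds 0) :=
      tendsto_pow_atTop_nhds_zero_of_norm_lt_one hlt
    have h0 : Tendsto (fun n : ℕ => q ^ (-(n : ℤ))) atTop (nhds 0) := by
      have he : ∀ n : ℕ, q ^ (-(n : ℤ)) = (q⁻¹) ^ n := by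
        intro n; rw [zpow_neg, zpow_natCast, inv_pow]
      simp only [he]
      apply tendsto_pow_atTop_nhds_zero_of_norm_lt_one
      rw [norm_inv, inv_lt_one_iff₀]; right; exact hq
    have h2 : Tendsto (fun n : ℕ => P.eval (q ^ (-(n : ℤ)))) atTop (nhds (P.eval 0)) :=
      (P.continuous.tendsto 0).comp h0
    have hP0' : P.eval 0 ≠ 0 := by rwa [← Polynomial.coeff_zero_eq_eval_zero]
    have h3 : Tendsto (fun n : ℕ => ‖α * ((q ^ s)⁻¹) ^ n / P.eval (q ^ (-(n : ℤ)))‖)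
        atTop (nhds 0) := by
      have := ((tendsto_const_nhds (x := α)).mul h1).div h2 hP0'
      simpa using this.norm
    have hev : ∀ᶠ n : ℕ in atTop,
        ‖α * ((q ^ s)⁻¹) ^ n / P.eval (q ^ (-(n : ℤ)))‖ ≤ 1/2 :=
      (h3.eventually_lt_const (by norm_num)).mono fun n h => h.le
    filter_upwards [hev] with n h
    rw [hrat n, norm_mul]
    exact mul_le_mul_of_nonneg_right h (norm_nonneg _)
  have h0 : a 0 = 1 := by simp [ha]
  have hsh : ∀ n : ℕ, a (n + 1) = (q ^ (s * ((n + 1) * n / 2)))⁻¹ * α ^ (n + 1)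
      / ∏ j ∈ Finset.range (n + 1), P.eval (q ^ (-(j : ℤ))) := by
    intro n
    simp only [ha, Nat.add_sub_cancel]
  rw [hfq, Summable.tsum_eq_zero_add hsum, h0]
  exact congrArg (1 + ·) (tsum_congr hsh)
end

section
/- Let f satisfy α z^s f(z) = P(z) f(qz) + Q(z) with deg Q ≤ u. Then for every k ≥ 1, (α z^s)^k q^{uk} f(z q^{−k}) = X_k(z,q) f(z) + Y_k(z,q), where X_k(z,q) = q^{s k(k+1)/2 + uk} Π_{j=1}^{k} P(z q^{−j}) and Y_k(z,q) = Σ_{j=1}^{k} (α z^s)^{j−1} q^{s(k(k+1)/2 − j(j−1)/2) + uk} Q(z q^{−j}) Π_{l=j+1}^{k} P(z q^{−l}). -/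
open Finset

lemma tri_key (k j : ℕ) (hj : j ≤ k + 1) :
    (k+1)*(k+2)/2 - j*(j-1)/2 = (k*(k+1)/2 - j*(j-1)/2) + (k+1) := by
  obtain ⟨a, ha⟩ := Nat.even_mul_succ_self k
  obtain ⟨b, hb⟩ : Even (j*(j-1)) := by
    rcases Nat.eq_zero_or_pos j with h|h
    · simp [h]
    · have := Nat.even_mul_succ_self (j-1)
      rwa [Nat.sub_add_cancel h, mul_comm] at this
  have hab : j*(j-1) ≤ k*(k+1) := by
    have := Nat.mul_le_mul hj (show j-1 ≤ k by omega)
    rwa [mul_comm (k+1) k] at this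
  have h2 : (k+1)*(k+2) = k*(k+1) + 2*(k+1) := by ring
  have key : ∀ m n p a b : ℕ, m = a + a → n = b + b → n ≤ m → p = m + 2*(k+1) →
      p/2 - n/2 = (m/2 - n/2) + (k+1) := by intros; omega
  exact key _ _ _ a b ha hb hab h2


/-- iteration identity.  If `f` satisfies
`α z^s f(z) = P(z) f(qz) + Q(z)` and `deg Q ≤ u`, then for every `k ≥ 1`,
`(α z^s)^k q^{uk} f(zq^{−k}) = X_k(z,q) f(z) + Y_k(z,q)` with
`X_k(z,q) = q^{sk(k+1)/2+uk} Π_{j=1}^{k} P(zq^{−j})` and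
`Y_k(z,q) = Σ_{j=1}^{k} (αz^s)^{j−1} q^{s(k(k+1)/2−j(j−1)/2)+uk} Q(zq^{−j}) Π_{l=j+1}^{k} P(zq^{−l})`. -/
theorem stmt4 (q : ℂ) (hq : 1 < ‖q‖) (s : ℕ) (hs : 0 < s)
    (P Q : Polynomial ℂ) (u : ℕ) (hu : Q.natDegree ≤ u)
    (α : ℂ) (hα : α ≠ 0)
    (f : ℂ → ℂ)
    (hfe : ∀ z : ℂ, α * z ^ s * f z = P.eval z * f (q * z) + Q.eval z) :
    ∀ k : ℕ, 1 ≤ k → ∀ z : ℂ,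
      (α * z ^ s) ^ k * q ^ (u * k) * f (z * q ^ (-(k : ℤ))) =
        (q ^ (s * (k * (k + 1) / 2) + u * k)
            * ∏ j ∈ Finset.Icc 1 k, P.eval (z * q ^ (-(j : ℤ)))) * f z
        + ∑ j ∈ Finset.Icc 1 k, (α * z ^ s) ^ (j - 1)
            * q ^ (s * (k * (k + 1) / 2 - j * (j - 1) / 2) + u * k)
            * Q.eval (z * q ^ (-(j : ℤ)))
            * ∏ l ∈ Finset.Icc (j + 1) k, P.eval (z * q ^ (-(l : ℤ))) := by
  have hq0 : q ≠ 0 := by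
    intro h; rw [h] at hq; simp at hq; linarith
  intro k hk
  clear hk
  induction k with
  | zero => intro z; simp
  | succ k ih =>
    intro z
    have hIH := ih z
    -- functional equation at z*q^{-(k+1)}
    have harg : q * (z * q ^ (-((k+1 : ℕ) : ℤ))) = z * q ^ (-(k : ℤ)) := by
      rw [show (-(((k+1) : ℕ) : ℤ)) = -(k:ℤ) + (-1) by push_cast; ring, zpow_add₀ hq0]
      field_simp
    have h := hfe (z * q ^ (-((k+1 : ℕ) : ℤ)))
    rw [harg] at h
    have hws : (z * q ^ (-((k+1 : ℕ) : ℤ))) ^ s * q ^ (s * (k+1)) = z ^ s := by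
      rw [mul_pow, ← zpow_natCast ((q) ^ (-((k+1 : ℕ) : ℤ))) s, ← zpow_mul,
        ← zpow_natCast q (s*(k+1)), mul_assoc, ← zpow_add₀ hq0,
        show (-(((k+1) : ℕ) : ℤ)) * s + ((s*(k+1) : ℕ) : ℤ) = 0 by push_cast; ring,
        zpow_zero, mul_one]
    have h2 : α * z ^ s * f (z * q ^ (-((k+1 : ℕ) : ℤ))) =
        q ^ (s * (k+1)) * (P.eval (z * q ^ (-((k+1 : ℕ) : ℤ))) * f (z * q ^ (-(k : ℤ)))
          + Q.eval (z * q ^ (-((k+1 : ℕ) : ℤ)))) := by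
      linear_combination q ^ (s*(k+1)) * h - α * f (z * q ^ (-((k+1 : ℕ) : ℤ))) * hws
    -- exponent identities
    have hE1 : s * ((k+1) * (k+1+1) / 2) + u * (k+1)
        = (s * (k*(k+1)/2) + u*k) + (s*(k+1) + u) := by
      have := tri_key k 0 (by omega)
      simp only [Nat.zero_mul, Nat.zero_div, Nat.sub_zero] at this
      rw [this]; ring
    have hE3 : s * ((k+1) * (k+1+1) / 2 - (k+1) * (k+1-1) / 2) + u * (k+1)
        = s*(k+1) + u*(k+1) := by
      have e1 : k+1+1 = k+2 := by omega
      have e2 : k+1-1 = k := by omega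
      rw [e1, e2]
      have h1 := tri_key k (k+1) le_rfl
      have h0 : k*(k+1)/2 - (k+1)*k/2 = 0 := by rw [mul_comm]; simp
      simp only [Nat.add_sub_cancel] at h1
      rw [h1, h0]; ring
    -- split off top of sum and product
    rw [Finset.sum_Icc_succ_top (by omega : 1 ≤ k+1), Finset.prod_Icc_succ_top (by omega : 1 ≤ k+1)]
    have hsum : (∑ j ∈ Finset.Icc 1 k, (α * z ^ s) ^ (j - 1)
            * q ^ (s * ((k+1) * (k+1+1) / 2 - j * (j - 1) / 2) + u * (k+1))
            * Q.eval (z * q ^ (-(j : ℤ)))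
            * ∏ l ∈ Finset.Icc (j + 1) (k+1), P.eval (z * q ^ (-(l : ℤ))))
        = (∑ j ∈ Finset.Icc 1 k, (α * z ^ s) ^ (j - 1)
            * q ^ (s * (k * (k + 1) / 2 - j * (j - 1) / 2) + u * k)
            * Q.eval (z * q ^ (-(j : ℤ)))
            * ∏ l ∈ Finset.Icc (j + 1) k, P.eval (z * q ^ (-(l : ℤ))))
          * (q ^ (s*(k+1) + u) * P.eval (z * q ^ (-((k+1 : ℕ) : ℤ)))) := by
      rw [Finset.sum_mul]
      apply Finset.sum_congr rfl
      intro j hj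
      simp only [Finset.mem_Icc] at hj
      rw [Finset.prod_Icc_succ_top (by omega : j+1 ≤ k+1),
        show s * ((k+1) * (k+1+1) / 2 - j * (j - 1) / 2) + u * (k+1)
          = (s * (k * (k + 1) / 2 - j * (j - 1) / 2) + u * k) + (s*(k+1) + u) by
            rw [show (k+1)*(k+1+1)/2 - j*(j-1)/2 = (k*(k+1)/2 - j*(j-1)/2) + (k+1) from
              tri_key k j (by omega)]; ring,
        pow_add]
      ring
    rw [hsum, hE1, hE3, pow_add]
    simp only [Nat.add_sub_cancel, show Finset.Icc (k+1+1) (k+1) = ∅ from Finset.Icc_eq_empty (by omega), Finset.prod_empty]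
    linear_combination ((α * z ^ s) ^ k * q ^ (u * (k+1))) * h2
      + (q ^ (s*(k+1) + u) * P.eval (z * q ^ (-((k+1 : ℕ) : ℤ)))) * hIH
end

section
/- The iterated denominator polynomials satisfy the closed form B_{ji}(z) = (Π_{l=0}^{j−1} α_i^{−1} P(q^l z)) B_{0i}(q^j z) + Σ_{l=1}^{j} (Π_{n=0}^{l−2} P(q^n z)) α_i^{−l} Q_i(q^{l−1} z) A_{j−l}(q^l z) for all j ≥ 0. -/
open Finset

/-- closed form for the iterated denominators:
with `B_{ji}(z) = α_i^{−1}(A_{j−1}(qz)Q_i(z) + P(z)B_{j−1,i}(qz))` and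
`A_j(z) = z^s A_{j−1}(qz)`, one has
`B_{ji}(z) = (Π_{l=0}^{j−1} α_i^{−1}P(q^l z)) B_{0i}(q^j z)
  + Σ_{l=1}^{j} (Π_{n=0}^{l−2} P(q^n z)) α_i^{−l} Q_i(q^{l−1} z) A_{j−l}(q^l z)`. -/
theorem stmt11 (q : ℂ) (s m : ℕ) (hs : 0 < s) (hm : 0 < m)
    (P : Polynomial ℂ) (Qp : Fin m → Polynomial ℂ)
    (α : Fin m → ℂ) (hα : ∀ i, α i ≠ 0)
    (A : ℕ → ℂ → ℂ) (B : ℕ → Fin m → ℂ → ℂ)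
    (hA : ∀ j, ∀ z : ℂ, A (j + 1) z = z ^ s * A j (q * z))
    (hB : ∀ j i, ∀ z : ℂ,
      B (j + 1) i z = (α i)⁻¹ * (A j (q * z) * (Qp i).eval z + P.eval z * B j i (q * z))) :
    ∀ j i, ∀ z : ℂ,
      B j i z =
        (∏ l ∈ Finset.range j, (α i)⁻¹ * P.eval (q ^ l * z)) * B 0 i (q ^ j * z)
          + ∑ l ∈ Finset.Icc 1 j,
              (∏ n ∈ Finset.range (l - 1), P.eval (q ^ n * z))
                * ((α i)⁻¹) ^ l * (Qp i).eval (q ^ (l - 1) * z)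
                * A (j - l) (q ^ l * z) := by
  have key : ∀ (f : ℕ → ℂ) (n : ℕ), ∑ l ∈ Finset.Icc 1 n, f l
      = ∑ l ∈ Finset.range n, f (l + 1) := by
    intro f n
    rw [← Finset.Ico_add_one_right_eq_Icc, Finset.sum_Ico_eq_sum_range]
    simp [add_comm]
  intro j i
  induction j with
  | zero =>
    intro z
    simp
  | succ j ih =>
    intro z
    have hq : ∀ (k : ℕ) (w : ℂ), q ^ k * (q * w) = q ^ (k + 1) * w := by
      intro k w; rw [pow_succ]; ring
    rw [hB j i z, ih (q * z), key, key]
    simp only [hq, Nat.add_sub_cancel]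
    rw [Finset.sum_range_succ', Finset.prod_range_succ']
    simp only [pow_zero, one_mul, Finset.prod_range_zero, pow_one, zero_add, Nat.add_sub_cancel]
    have hS : (∑ k ∈ Finset.range j,
          (∏ x ∈ Finset.range (k + 1), P.eval (q ^ x * z)) * (α i)⁻¹ ^ (k + 1 + 1) *
              (Qp i).eval (q ^ (k + 1) * z) * A (j + 1 - (k + 1 + 1)) (q ^ (k + 1 + 1) * z))
        = (α i)⁻¹ * P.eval z * ∑ x ∈ Finset.range j,
            (∏ n ∈ Finset.range x, P.eval (q ^ (n + 1) * z)) * (α i)⁻¹ ^ (x + 1) *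
              (Qp i).eval (q ^ (x + 1) * z) * A (j - (x + 1)) (q ^ (x + 1 + 1) * z) := by
      rw [Finset.mul_sum]
      refine Finset.sum_congr rfl fun k _ => ?_
      rw [Finset.prod_range_succ']
      have h1 : j + 1 - (k + 1 + 1) = j - (k + 1) := by omega
      rw [h1]
      simp only [pow_zero, one_mul]
      ring
    rw [hS]
    ring
end

section
/- Let f be analytic near 0, not a polynomial, satisfying α z^s f(z) = P(z) f(qz) + Q(z) with |q| > 1, deg P ≤ s, P(0) ≠ 0, Q ≢ 0. If f is a rational function, then f is a polynomial; consequently, under the hypothesis, f is not a rational function. -/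
open Polynomial


/-- an analytic solution of `α z^s f(z) = P(z) f(qz) + Q(z)` that is a
rational function must be a polynomial; consequently, if `f` is not a polynomial
(on its disc of analyticity), it is not a rational function there. -/
theorem stmt13 (q : ℂ) (hq : 1 < ‖q‖) (s : ℕ) (hs : 0 < s)
    (P Q : Polynomial ℂ) (hP0 : P.coeff 0 ≠ 0) (hPdeg : P.natDegree ≤ s) (hQ : Q ≠ 0)
    (α : ℂ) (hα : α ≠ 0)
    (r : ℝ) (hr : 0 < r) (f : ℂ → ℂ)
    (hfa : AnalyticOnNhd ℂ f (Metric.ball 0 r))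
    (hfe : ∀ w : ℂ, ‖q * w‖ < r →
      α * w ^ s * f w = P.eval w * f (q * w) + Q.eval w)
    (hnotpoly : ¬∃ p : Polynomial ℂ, ∀ z ∈ Metric.ball (0 : ℂ) r, f z = p.eval z) :
    (∀ p d : Polynomial ℂ, d ≠ 0 →
      (∀ z ∈ Metric.ball (0 : ℂ) r, f z * d.eval z = p.eval z) →
      ∃ p' : Polynomial ℂ, ∀ z ∈ Metric.ball (0 : ℂ) r, f z = p'.eval z) ∧
    ¬∃ p d : Polynomial ℂ, d ≠ 0 ∧
      ∀ z ∈ Metric.ball (0 : ℂ) r, f z * d.eval z = p.eval z := by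
  have hq0 : (0:ℝ) < ‖q‖ := lt_trans one_pos hq
  have hqne : q ≠ 0 := by
    intro h; rw [h] at hq; simp at hq; linarith
  have h0mem : (0:ℂ) ∈ Metric.ball (0:ℂ) r := by simpa using hr
  have key : ∀ p d : Polynomial ℂ, d ≠ 0 →
      (∀ z ∈ Metric.ball (0 : ℂ) r, f z * d.eval z = p.eval z) →
      ∃ p' : Polynomial ℂ, ∀ z ∈ Metric.ball (0 : ℂ) r, f z = p'.eval z := by
    intro p d hd hpd
    set g := GCDMonoid.gcd p d with hgdef
    have hg : g ≠ 0 := gcd_ne_zero_of_right hd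
    set p1 := p / g with hp1def
    set d1 := d / g with hd1def
    have hp1 : g * p1 = p := EuclideanDomain.mul_div_cancel' hg (gcd_dvd_left p d)
    have hd1 : g * d1 = d := EuclideanDomain.mul_div_cancel' hg (gcd_dvd_right p d)
    have hd1ne : d1 ≠ 0 := right_div_gcd_ne_zero hd
    have hcop : IsCoprime p1 d1 := isCoprime_div_gcd_div_gcd hd
    have hnocommon : ∀ z : ℂ, ¬(p1.eval z = 0 ∧ d1.eval z = 0) := by
      rintro z ⟨h1, h2⟩
      obtain ⟨u, v, huv⟩ := hcop
      have := congrArg (Polynomial.eval z) huv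
      simp [h1, h2] at this
    -- step 1: f z * d1.eval z = p1.eval z on the ball
    have hF : AnalyticOnNhd ℂ (fun z => f z * d1.eval z) (Metric.ball 0 r) :=
      hfa.mul ((AnalyticOnNhd.eval_polynomial (𝕜 := ℂ) d1).mono (Set.subset_univ _))
    have hG : AnalyticOnNhd ℂ (fun z => p1.eval z) (Metric.ball (0:ℂ) r) :=
      (AnalyticOnNhd.eval_polynomial (𝕜 := ℂ) p1).mono (Set.subset_univ _)
    have hfreq : ∃ᶠ z in nhdsWithin (0:ℂ) {(0:ℂ)}ᶜ,
        f z * d1.eval z = p1.eval z := by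
      have hSfin : Set.Finite {x : ℂ | g.IsRoot x} := g.finite_setOf_isRoot hg
      have hev1 : ∀ᶠ z in nhds (0:ℂ), z ∉ ({x : ℂ | g.IsRoot x} \ {0}) := by
        apply IsOpen.eventually_mem ?_ ?_
        · exact (hSfin.subset Set.diff_subset).isClosed.isOpen_compl
        · exact fun h => h.2 rfl
      have hev2 : ∀ᶠ z in nhds (0:ℂ), z ∈ Metric.ball (0:ℂ) r :=
        Metric.isOpen_ball.eventually_mem h0mem
      apply Filter.Eventually.frequently
      rw [eventually_nhdsWithin_iff]
      filter_upwards [hev1, hev2] with z hz1 hz2 hz0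
      have hz0' : z ≠ 0 := by simpa using hz0
      have hgz : g.eval z ≠ 0 := by
        intro h
        exact hz1 ⟨h, by simpa using hz0'⟩
      have := hpd z hz2
      rw [← hp1, ← hd1] at this
      simp only [Polynomial.eval_mul] at this
      have h' : g.eval z * (f z * d1.eval z) = g.eval z * p1.eval z := by
        rw [← this]; ring
      exact mul_left_cancel₀ hgz h'
    have h2 : ∀ z ∈ Metric.ball (0:ℂ) r, f z * d1.eval z = p1.eval z :=
      fun z hz => hF.eqOn_of_preconnected_of_frequently_eq hG
        (convex_ball (0:ℂ) r).isPreconnected h0mem hfreq hz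
    -- step 2: the polynomial identity
    have hAB : C α * (X ^ s * p1 * d1.comp (C q * X)) =
        P * p1.comp (C q * X) * d1 + Q * (d1 * d1.comp (C q * X)) := by
      apply Polynomial.eq_of_infinite_eval_eq
      apply Set.Infinite.mono (s := Metric.ball (0:ℂ) (r / ‖q‖))
      · intro w hw
        simp only [Metric.mem_ball, Complex.dist_eq, sub_zero] at hw
        have hww : ‖q * w‖ < r := by
          rw [norm_mul]
          calc ‖q‖ * ‖w‖ < ‖q‖ * (r / ‖q‖) := by
                apply mul_lt_mul_of_pos_left hw hq0
            _ = r := by field_simp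
        have hwball : w ∈ Metric.ball (0:ℂ) r := by
          simp only [Metric.mem_ball, Complex.dist_eq, sub_zero]
          calc ‖w‖ ≤ ‖q‖ * ‖w‖ := by
                nlinarith [norm_nonneg w]
            _ < r := by rw [← norm_mul]; exact hww
        have hqwball : q * w ∈ Metric.ball (0:ℂ) r := by
          simpa [Metric.mem_ball, Complex.dist_eq] using hww
        have e1 := h2 w hwball
        have e2 := h2 (q * w) hqwball
        have e3 := hfe w hww
        simp only [Set.mem_setOf_eq, Polynomial.eval_mul, Polynomial.eval_pow,
          Polynomial.eval_comp, Polynomial.eval_C, Polynomial.eval_X,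
          Polynomial.eval_add]
        rw [← e1, ← e2]
        linear_combination (d1.eval w * d1.eval (q * w)) * e3
      · exact infinite_of_mem_nhds (0:ℂ) (Metric.ball_mem_nhds 0 (by positivity))
    -- step 3: roots of d1 propagate
    have hroot : ∀ z : ℂ, d1.eval z = 0 → z ≠ 0 ∧ d1.eval (q * z) = 0 := by
      intro z hz
      have hz0 : z ≠ 0 := by
        rintro rfl
        have h20 := h2 0 h0mem
        rw [hz, mul_zero] at h20
        exact hnocommon 0 ⟨h20.symm, hz⟩
      have hp1z : p1.eval z ≠ 0 := fun h => hnocommon z ⟨h, hz⟩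
      refine ⟨hz0, ?_⟩
      have hev := congrArg (Polynomial.eval z) hAB
      simp only [Polynomial.eval_mul, Polynomial.eval_pow, Polynomial.eval_comp,
        Polynomial.eval_C, Polynomial.eval_X, Polynomial.eval_add] at hev
      have hkey : α * z ^ s * p1.eval z * d1.eval (q * z) = 0 := by
        linear_combination hev + (P.eval z * p1.eval (q * z) + Q.eval z * d1.eval (q * z)) * hz
      simpa [mul_eq_zero, hα, hp1z, hz0, pow_eq_zero_iff, hs.ne'] using hkey
    -- step 4: d1 has no roots
    have hnoroot : ∀ z : ℂ, d1.eval z ≠ 0 := by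
      intro z₀ hz₀
      have hiter : ∀ k : ℕ, d1.eval (q ^ k * z₀) = 0 := by
        intro k
        induction k with
        | zero => simpa using hz₀
        | succ n ih =>
          have := (hroot _ ih).2
          rw [← mul_assoc] at this
          rw [pow_succ, mul_comm (q ^ n) q]
          exact this
      have hz0ne : z₀ ≠ 0 := (hroot z₀ hz₀).1
      have hinj : Function.Injective (fun k : ℕ => q ^ k * z₀) := by
        have hsm : StrictMono (fun k : ℕ => ‖q ^ k * z₀‖) := by
          intro a b hab
          simp only [norm_mul, norm_pow]
          have : ‖q‖ ^ a < ‖q‖ ^ b := pow_lt_pow_right₀ hq hab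
          have hz0pos : 0 < ‖z₀‖ := by
            simpa [norm_pos_iff] using hz0ne
          exact mul_lt_mul_of_pos_right this hz0pos
        intro a b hab
        exact hsm.injective (by simpa using congrArg norm hab)
      have hinf : Set.Infinite {x : ℂ | d1.IsRoot x} :=
        Set.infinite_of_injective_forall_mem hinj (fun k => hiter k)
      exact hd1ne (d1.eq_zero_of_infinite_isRoot hinf)
    have hdeg : d1.natDegree = 0 := by
      by_contra h0
      obtain ⟨z, hz⟩ := Complex.exists_root
        (Polynomial.natDegree_pos_iff_degree_pos.mp (Nat.pos_of_ne_zero h0))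
      exact hnoroot z hz
    set c := d1.coeff 0 with hcdef
    have hceq : d1 = C c := Polynomial.eq_C_of_natDegree_eq_zero hdeg
    have hc0 : c ≠ 0 := by
      intro h; rw [h, map_zero] at hceq; exact hd1ne hceq
    refine ⟨C c⁻¹ * p1, fun z hz => ?_⟩
    have := h2 z hz
    rw [hceq] at this
    simp only [Polynomial.eval_C] at this
    rw [Polynomial.eval_mul, Polynomial.eval_C, ← this]
    field_simp
  refine ⟨key, ?_⟩
  rintro ⟨p, d, hd, h⟩
  exact hnotpoly (key p d hd h)
end

section
/- With Δ(z) the Padé determinant and degree parameters as constructed, ord_{z=0} Δ(z) ≥ (m+1)N − mδN and deg Δ(z) ≤ (m+1)N + S m(m+1)/2 where S = max{s, max_i deg Q_i}. Hence Δ has at most mδN + S m(m+1)/2 nonzero roots, and for any α ∈ K∖{0} and any ρ > mδ there exists an integer k with (ρ − mδ)N − S m(m+1)/2 − 1 < k ≤ ρN and Δ(α q^{−k}) ≠ 0. -/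
open Finset Polynomial

open Filter in
private lemma auxTrailing (p : Polynomial ℂ) (hp : p ≠ 0) (T : ℕ) (g : ℂ → ℂ)
    (hg : AnalyticAt ℂ g 0) (h : ∀ᶠ z in nhds (0:ℂ), p.eval z = z ^ T * g z) :
    T ≤ p.natTrailingDegree := by
  by_contra hlt
  push_neg at hlt
  obtain ⟨p', hp'⟩ : (X : ℂ[X]) ^ p.natTrailingDegree ∣ p :=
    X_pow_dvd_iff.mpr fun d hd => coeff_eq_zero_of_lt_natTrailingDegree hd
  set t := p.natTrailingDegree with ht
  have hc0 : p'.eval 0 ≠ 0 := by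
    have h1 : p.coeff t ≠ 0 := coeff_natTrailingDegree_ne_zero.mpr hp
    rw [hp'] at h1
    have h2 := coeff_X_pow_mul p' t 0
    rw [zero_add] at h2
    rw [h2] at h1
    rwa [← coeff_zero_eq_eval_zero]
  have hev : ∀ᶠ z in nhdsWithin (0:ℂ) {(0:ℂ)}ᶜ,
      p'.eval z = z ^ (T - t) * g z := by
    filter_upwards [nhdsWithin_le_nhds h, self_mem_nhdsWithin] with z hz hz0
    have hz0' : z ≠ 0 := hz0
    have hkey : z ^ t * p'.eval z = z ^ t * (z ^ (T - t) * g z) := by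
      rw [← mul_assoc, ← pow_add, Nat.add_sub_cancel' hlt.le]
      rw [hp'] at hz
      simpa [eval_mul, eval_pow] using hz
    exact mul_left_cancel₀ (pow_ne_zero t hz0') hkey
  have l1 : Tendsto (fun z => p'.eval z) (nhdsWithin (0:ℂ) {(0:ℂ)}ᶜ)
      (nhds (p'.eval 0)) :=
    ((Polynomial.continuous_aeval p').tendsto 0).mono_left nhdsWithin_le_nhds
  have l2 : Tendsto (fun z : ℂ => z ^ (T - t) * g z) (nhdsWithin (0:ℂ) {(0:ℂ)}ᶜ)
      (nhds 0) := by
    have l3 : Tendsto (fun z : ℂ => z ^ (T - t) * g z) (nhds 0)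
        (nhds ((0:ℂ) ^ (T - t) * g 0)) :=
      ((continuous_pow (T - t)).tendsto 0).mul hg.continuousAt
    rw [zero_pow (by omega), zero_mul] at l3
    exact l3.mono_left nhdsWithin_le_nhds
  exact hc0 (tendsto_nhds_unique (Filter.Tendsto.congr' hev l1) l2)

private lemma auxRoots (p : Polynomial ℂ) (hp : p ≠ 0) :
    (p.roots.filter fun x => x ≠ 0).card ≤ p.natDegree - p.natTrailingDegree := by
  obtain ⟨p', hp'⟩ : (X : ℂ[X]) ^ p.natTrailingDegree ∣ p :=
    X_pow_dvd_iff.mpr fun d hd => coeff_eq_zero_of_lt_natTrailingDegree hd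
  set t := p.natTrailingDegree with ht
  have hp'0 : p' ≠ 0 := by
    rintro rfl
    rw [mul_zero] at hp'
    exact hp hp'
  have hdeg : p.natDegree = t + p'.natDegree := by
    rw [hp', natDegree_mul (pow_ne_zero _ X_ne_zero) hp'0, natDegree_X_pow]
  have hroots : p.roots = ((X : ℂ[X]) ^ t).roots + p'.roots := by
    rw [hp', roots_mul (hp' ▸ hp)]
  have hXt : (((X : ℂ[X]) ^ t).roots.filter fun x => x ≠ (0:ℂ)) = 0 := by
    rw [roots_pow, roots_X, Multiset.nsmul_singleton]
    rw [Multiset.filter_eq_nil]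
    intro a hA
    rw [Multiset.eq_of_mem_replicate hA]
    simp
  have hle : (p.roots.filter fun x => x ≠ 0).card ≤ p'.roots.card := by
    rw [hroots, Multiset.filter_add, hXt, Multiset.card_add, Multiset.card_zero, zero_add]
    exact Multiset.card_le_card (Multiset.filter_le _ _)
  have := p'.card_roots'
  omega

/-- order and degree bounds for the Padé determinant `Δ`, the count
of its nonzero roots, and existence of an integer `k` in the window
`(ρ−mδ)N − Sm(m+1)/2 − 1 < k ≤ ρN` with `Δ(α q^{−k}) ≠ 0`. -/
theorem stmt14 (q : ℂ) (hq : 1 < ‖q‖) (s m : ℕ) (hs : 0 < s) (hm : 0 < m)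
    (P : Polynomial ℂ) (hP0 : P.coeff 0 ≠ 0) (hPdeg : P.natDegree ≤ s)
    (Qp : Fin m → Polynomial ℂ)
    (α : Fin m → ℂ) (hα : ∀ i, α i ≠ 0)
    (r : ℝ) (hr : 0 < r) (f : Fin m → ℂ → ℂ)
    (hfa : ∀ i, AnalyticOnNhd ℂ (f i) (Metric.ball 0 r))
    (hfe : ∀ i, ∀ w : ℂ, ‖q * w‖ < r →
      α i * w ^ s * f i w = P.eval w * f i (q * w) + (Qp i).eval w)
    (A : ℕ → Polynomial ℂ) (B : ℕ → Fin m → Polynomial ℂ)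
    (hArec : ∀ j, A (j + 1) = X ^ s * (A j).comp (C q * X))
    (hBrec : ∀ j i, B (j + 1) i
      = C (α i)⁻¹ * ((A j).comp (C q * X) * Qp i + P * (B j i).comp (C q * X)))
    (n : Fin m → ℕ) (hn : ∀ i, 0 < n i)
    (δ : ℝ) (hδ0 : 0 < δ) (hδ1 : δ < 1 / m)
    (hdegA : (A 0).natDegree ≤ ∑ i, n i)
    (hdegB : ∀ i, (B 0 i).natDegree ≤ ∑ i, n i)
    (Sb : ℕ) (hSb : Sb = max s (Finset.univ.sup fun i => (Qp i).natDegree))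
    -- `ord_{z=0} R_{0i} ≥ N + n_i − ⌊δN⌋`:
    (hRord : ∀ i, ∃ g : ℂ → ℂ, AnalyticAt ℂ g 0 ∧ ∀ᶠ z in nhds (0 : ℂ),
      (A 0).eval z * f i z - (B 0 i).eval z
        = z ^ ((∑ i, n i) + n i - ⌊δ * (∑ i, n i : ℕ)⌋₊) * g z)
    (Δ : Polynomial ℂ)
    (hΔ : Δ = Matrix.det (Matrix.of fun j i : Fin (m + 1) =>
      (Fin.cases (A (j : ℕ)) (fun i' => B (j : ℕ) i') i : Polynomial ℂ)))
    (hΔne : Δ ≠ 0) :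
    ((m + 1 : ℝ) * (∑ i, n i : ℕ) - m * δ * (∑ i, n i : ℕ) ≤ (Δ.natTrailingDegree : ℝ)) ∧
    (Δ.natDegree ≤ (m + 1) * (∑ i, n i) + Sb * (m * (m + 1)) / 2) ∧
    (((Δ.roots.filter fun x => x ≠ 0).card : ℝ)
      ≤ m * δ * (∑ i, n i : ℕ) + Sb * (m * (m + 1)) / 2) ∧
    (∀ a : ℂ, a ≠ 0 → ∀ ρ : ℝ, m * δ < ρ →
      ∃ k : ℤ, (ρ - m * δ) * (∑ i, n i : ℕ) - Sb * (m * (m + 1)) / 2 - 1 < (k : ℝ) ∧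
        (k : ℝ) ≤ ρ * (∑ i, n i : ℕ) ∧ Δ.eval (a * q ^ (-k)) ≠ 0) := by
  have hq0 : q ≠ 0 := by
    rintro rfl
    simp only [norm_zero] at hq
    norm_num at hq
  set N := ∑ i, n i with hN
  -- basic size facts
  have hm1 : (1:ℝ) ≤ m := by exact_mod_cast hm
  have hδlt1 : δ < 1 := lt_of_lt_of_le hδ1 (by
    rw [div_le_one (by positivity)]; exact hm1)
  have hsS : s ≤ Sb := hSb ▸ le_max_left _ _
  have hQS : ∀ i, (Qp i).natDegree ≤ Sb := by
    intro i
    rw [hSb]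
    exact le_trans (Finset.le_sup (f := fun i => (Qp i).natDegree) (Finset.mem_univ i))
      (le_max_right _ _)
  -- degree bounds for A and B
  have hdegAj : ∀ j, (A j).natDegree ≤ N + j * s := by
    intro j
    induction j with
    | zero => simpa using hdegA
    | succ j ih =>
      rw [hArec]
      refine natDegree_mul_le.trans ?_
      have h1 : ((A j).comp (C q * X)).natDegree ≤ (A j).natDegree := by
        refine natDegree_comp_le.trans ?_
        rw [natDegree_C_mul_X q hq0, mul_one]
      calc (X ^ s : ℂ[X]).natDegree + ((A j).comp (C q * X)).natDegree
          ≤ s + (N + j * s) := by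
            rw [natDegree_X_pow]
            exact Nat.add_le_add_left (h1.trans ih) s
        _ = N + (j + 1) * s := by ring
  have hdegAj' : ∀ j, (A j).natDegree ≤ N + j * Sb := fun j =>
    (hdegAj j).trans (Nat.add_le_add_left (Nat.mul_le_mul_left j hsS) N)
  have hdegBj : ∀ j i, (B j i).natDegree ≤ N + j * Sb := by
    intro j
    induction j with
    | zero => intro i; simpa using hdegB i
    | succ j ih =>
      intro i
      rw [hBrec]
      refine natDegree_mul_le.trans ?_
      have hcomp : ((B j i).comp (C q * X)).natDegree ≤ (B j i).natDegree := by
        refine natDegree_comp_le.trans ?_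
        rw [natDegree_C_mul_X q hq0, mul_one]
      have hAcomp : ((A j).comp (C q * X)).natDegree ≤ (A j).natDegree := by
        refine natDegree_comp_le.trans ?_
        rw [natDegree_C_mul_X q hq0, mul_one]
      have h2 : ((A j).comp (C q * X) * Qp i + P * (B j i).comp (C q * X)).natDegree
          ≤ N + (j + 1) * Sb := by
        refine (natDegree_add_le _ _).trans (max_le ?_ ?_)
        · refine natDegree_mul_le.trans ?_
          have := (hAcomp.trans (hdegAj' j))
          have := hQS i
          calc ((A j).comp (C q * X)).natDegree + (Qp i).natDegree
              ≤ (N + j * Sb) + Sb := by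
                exact add_le_add (hAcomp.trans (hdegAj' j)) (hQS i)
            _ = N + (j + 1) * Sb := by ring
        · refine natDegree_mul_le.trans ?_
          calc P.natDegree + ((B j i).comp (C q * X)).natDegree
              ≤ Sb + (N + j * Sb) := add_le_add (hPdeg.trans hsS) (hcomp.trans (ih i))
            _ = N + (j + 1) * Sb := by ring
      simpa [natDegree_C] using h2
  -- the polynomial matrix
  set Mp : Matrix (Fin (m + 1)) (Fin (m + 1)) ℂ[X] :=
    Matrix.of fun j i : Fin (m + 1) =>
      (Fin.cases (A (j : ℕ)) (fun i' => B (j : ℕ) i') i : Polynomial ℂ) with hMp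
  have hentry : ∀ j i : Fin (m + 1), (Mp j i).natDegree ≤ N + (j : ℕ) * Sb := by
    intro j i
    refine Fin.cases ?_ ?_ i
    · simpa [hMp] using hdegAj' (j : ℕ)
    · intro i'
      simpa [hMp] using hdegBj (j : ℕ) i'
  have hgauss : ∑ i : Fin (m + 1), (i : ℕ) = m * (m + 1) / 2 := by
    rw [Fin.sum_univ_eq_sum_range (fun i => i), Finset.sum_range_id]
    simp [Nat.mul_comm]
  have hdvd2 : 2 ∣ m * (m + 1) := (Nat.even_mul_succ_self m).two_dvd
  -- degree bound for Δ
  have hdegΔ : Δ.natDegree ≤ (m + 1) * N + Sb * (m * (m + 1)) / 2 := by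
    rw [hΔ, Matrix.det_apply]
    refine natDegree_sum_le_of_forall_le _ _ ?_
    intro σ _
    simp only [Units.smul_def, zsmul_eq_mul]
    refine natDegree_mul_le.trans ?_
    rw [natDegree_intCast, zero_add]
    refine (natDegree_prod_le _ _).trans ?_
    calc ∑ i : Fin (m + 1), (Mp (σ i) i).natDegree
        ≤ ∑ i : Fin (m + 1), (N + (σ i : ℕ) * Sb) :=
          Finset.sum_le_sum fun i _ => hentry (σ i) i
      _ = (m + 1) * N + Sb * (m * (m + 1)) / 2 := by
          rw [Finset.sum_add_distrib, Finset.sum_const, Finset.card_univ, Fintype.card_fin,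
            smul_eq_mul, ← Finset.sum_mul, Equiv.sum_comp σ (fun i : Fin (m + 1) => (i : ℕ)),
            hgauss, Nat.mul_div_assoc Sb hdvd2, Nat.mul_comm (m * (m + 1) / 2) Sb]
  -- remainder order propagation
  have hqmul : Filter.Tendsto (fun z : ℂ => q * z) (nhds 0) (nhds 0) := by
    have h := (continuous_mul_left q).tendsto 0
    simpa only [mul_zero] using h
  have hTg : ∀ (j : ℕ) (i : Fin m), ∃ g : ℂ → ℂ, AnalyticAt ℂ g 0 ∧ ∀ᶠ z in nhds (0:ℂ),
      (A j).eval z * f i z - (B j i).eval z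
        = z ^ (N + n i - ⌊δ * (N : ℝ)⌋₊) * g z := by
    intro j
    induction j with
    | zero => exact hRord
    | succ j ih =>
      intro i
      obtain ⟨g, hg, hev⟩ := ih i
      have hαi := hα i
      refine ⟨fun z => (α i)⁻¹ * P.eval z * q ^ (N + n i - ⌊δ * (N : ℝ)⌋₊) * g (q * z),
        ?_, ?_⟩
      · have hinner : AnalyticAt ℂ (fun z : ℂ => q * z) 0 :=
          analyticAt_const.mul analyticAt_id
        have hg' : AnalyticAt ℂ g ((fun z : ℂ => q * z) 0) := by simpa using hg
        have hgq : AnalyticAt ℂ (fun z => g (q * z)) 0 := by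
          exact hg'.comp hinner
        exact ((analyticAt_const.mul
          ((AnalyticOnNhd.eval_polynomial (𝕜 := ℂ) P) 0 trivial)).mul
            analyticAt_const).mul hgq
      · have hsmall : ∀ᶠ z in nhds (0:ℂ), ‖q * z‖ < r := by
          have habs : Filter.Tendsto (fun z : ℂ => ‖z‖) (nhds 0) (nhds 0) := by
            simpa using continuous_norm.tendsto (0:ℂ)
          exact (habs.comp hqmul).eventually_lt_const hr
        filter_upwards [hqmul.eventually hev, hsmall] with z h1 h2
        have hfeq := hfe i z h2
        have hA1 : (A (j+1)).eval z = z ^ s * (A j).eval (q * z) := by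
          rw [hArec]; simp [eval_comp]
        have hB1 : (B (j+1) i).eval z
            = (α i)⁻¹ * ((A j).eval (q * z) * (Qp i).eval z
                + P.eval z * (B j i).eval (q * z)) := by
          rw [hBrec]; simp [eval_comp]
        have key : α i * ((A (j+1)).eval z * f i z - (B (j+1) i).eval z)
            = P.eval z * ((A j).eval (q * z) * f i (q * z) - (B j i).eval (q * z)) := by
          rw [hA1, hB1]
          linear_combination (A j).eval (q * z) * hfeq -
            ((A j).eval (q * z) * (Qp i).eval z
              + P.eval z * (B j i).eval (q * z)) * mul_inv_cancel₀ hαi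
        rw [h1] at key
        rw [← inv_mul_cancel_left₀ hαi
          ((A (j+1)).eval z * f i z - (B (j+1) i).eval z), key, mul_pow]
        ring
  choose g hganal hgev using hTg
  set Texp := ∑ i' : Fin m, (N + n i' - ⌊δ * (N : ℝ)⌋₊) with hTexpdef
  -- the analytic cofactor matrix
  set Gm : ℂ → Matrix (Fin (m + 1)) (Fin (m + 1)) ℂ := fun z =>
    Matrix.of fun j i : Fin (m + 1) =>
      (Fin.cases ((A (j : ℕ)).eval z) (fun i' => g (j : ℕ) i' z) i : ℂ) with hGm
  have hGanal : AnalyticAt ℂ (fun z => (Gm z).det) 0 := by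
    simp only [Matrix.det_apply]
    refine Finset.analyticAt_fun_sum _ fun σ _ => ?_
    simp only [Units.smul_def, zsmul_eq_mul]
    refine analyticAt_const.mul ?_
    refine Finset.analyticAt_fun_prod _ fun i _ => ?_
    refine Fin.cases ?_ ?_ i
    · simpa [hGm] using (AnalyticOnNhd.eval_polynomial (𝕜 := ℂ) (A ((σ 0 : Fin (m+1)) : ℕ))) 0 trivial
    · intro i'
      simpa [hGm] using hganal ((σ i'.succ : Fin (m+1)) : ℕ) i'
  -- the elementary column-operation matrix
  set E : ℂ → Matrix (Fin (m + 1)) (Fin (m + 1)) ℂ := fun z =>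
    Matrix.of fun k i : Fin (m + 1) =>
      (if k = 0 then (Fin.cases 0 (fun i' => f i' z) i : ℂ) else 0) +
      (if k = i then (Fin.cases 1 (fun _ => -1) i : ℂ) else 0) with hE
  have hEdet : ∀ z, (E z).det = (-1 : ℂ) ^ m := by
    intro z
    rw [Matrix.det_of_upperTriangular]
    · rw [Fin.prod_univ_succ]
      simp [hE, Fin.succ_ne_zero]
    · intro a b hab
      have hba : (b : Fin (m + 1)) < a := hab
      have h1 : a ≠ 0 := (lt_of_le_of_lt (Fin.zero_le b) hba).ne'
      have h2 : a ≠ b := ne_of_gt hba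
      simp [hE, h1, h2]
  have hmul : ∀ z, (Mp.map (fun p => p.eval z)) * E z
      = Matrix.of fun j i : Fin (m + 1) =>
          (Fin.cases ((A (j : ℕ)).eval z)
            (fun i' => (A (j : ℕ)).eval z * f i' z - (B (j : ℕ) i').eval z) i : ℂ) := by
    intro z
    ext j i
    rw [Matrix.mul_apply]
    simp only [hE, Matrix.of_apply, mul_add, mul_ite, mul_zero, Finset.sum_add_distrib,
      Finset.sum_ite_eq', Finset.mem_univ, if_true]
    refine Fin.cases ?_ ?_ i
    · simp [hMp]
    · intro i'
      simp only [Fin.cases_succ, Fin.cases_zero, Matrix.of_apply, Matrix.map_apply, hMp]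
      ring
  -- eventual factorization of Δ
  have hevAll : ∀ᶠ z in nhds (0:ℂ), ∀ (j : Fin (m + 1)) (i : Fin m),
      (A (j : ℕ)).eval z * f i z - (B (j : ℕ) i).eval z
        = z ^ (N + n i - ⌊δ * (N : ℝ)⌋₊) * g (j : ℕ) i z := by
    rw [Filter.eventually_all]
    intro j
    rw [Filter.eventually_all]
    intro i
    exact hgev (j : ℕ) i
  have hDel : ∀ᶠ z in nhds (0:ℂ),
      Δ.eval z = z ^ Texp * ((-1 : ℂ) ^ m * (Gm z).det) := by
    filter_upwards [hevAll] with z hz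
    have e1 : Δ.eval z = (Mp.map (fun p => p.eval z)).det := by
      rw [hΔ]
      have h := RingHom.map_det (evalRingHom z) Mp
      simpa [coe_evalRingHom, hMp] using h
    have e3 : (Mp.map (fun p => p.eval z)) * E z
        = Matrix.of fun j i : Fin (m + 1) =>
            (Fin.cases (1 : ℂ) (fun i' => z ^ (N + n i' - ⌊δ * (N : ℝ)⌋₊)) i : ℂ)
              * Gm z j i := by
      rw [hmul z]
      ext j i
      refine Fin.cases ?_ ?_ i
      · simp [hGm]
      · intro i'
        simp only [Matrix.of_apply, Fin.cases_succ]
        rw [hz j i']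
        simp [hGm]
    have e4 : ((Mp.map (fun p => p.eval z)) * E z).det
        = z ^ Texp * (Gm z).det := by
      rw [e3, Matrix.det_mul_row]
      congr 1
      rw [Fin.prod_univ_succ]
      simp only [Fin.cases_zero, Fin.cases_succ, one_mul]
      rw [Finset.prod_pow_eq_pow_sum]
    have e2 : ((Mp.map (fun p => p.eval z)) * E z).det
        = (Mp.map (fun p => p.eval z)).det * (-1 : ℂ) ^ m := by
      rw [Matrix.det_mul, hEdet z]
    have hsq : ((-1 : ℂ) ^ m) * ((-1 : ℂ) ^ m) = 1 := by
      rw [← pow_add, ← two_mul, pow_mul]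
      norm_num
    have : (Mp.map (fun p => p.eval z)).det
        = z ^ Texp * (Gm z).det * (-1 : ℂ) ^ m := by
      rw [← e4, e2, mul_assoc, hsq, mul_one]
    rw [e1, this]
    ring
  have htrail : Texp ≤ Δ.natTrailingDegree :=
    auxTrailing Δ hΔne Texp (fun z => (-1 : ℂ) ^ m * (Gm z).det)
      (analyticAt_const.mul hGanal) hDel
  -- numeric facts about the floor
  have hNnn : (0:ℝ) ≤ (N : ℝ) := Nat.cast_nonneg N
  have hfloor_le : (⌊δ * (N : ℝ)⌋₊ : ℝ) ≤ δ * N := Nat.floor_le (by positivity)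
  have hδN_le : δ * (N : ℝ) ≤ N := by nlinarith
  have hfloor_leN : ⌊δ * (N : ℝ)⌋₊ ≤ N := by
    have : (⌊δ * (N : ℝ)⌋₊ : ℝ) ≤ (N : ℝ) := hfloor_le.trans hδN_le
    exact_mod_cast this
  -- goal 1
  have goal1 : ((m : ℝ) + 1) * N - m * δ * N ≤ (Δ.natTrailingDegree : ℝ) := by
    have h1 : (Texp : ℝ) ≤ (Δ.natTrailingDegree : ℝ) := by exact_mod_cast htrail
    have hcast : (Texp : ℝ)
        = ∑ i : Fin m, ((N : ℝ) + (n i : ℝ) - (⌊δ * (N : ℝ)⌋₊ : ℝ)) := by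
      rw [hTexpdef, Nat.cast_sum]
      refine Finset.sum_congr rfl fun i _ => ?_
      rw [Nat.cast_sub (hfloor_leN.trans (Nat.le_add_right _ _))]
      push_cast
      ring
    have hsumn : ∑ i : Fin m, ((n i : ℝ)) = (N : ℝ) := by
      rw [hN]; push_cast; rfl
    have h2 : ((m : ℝ) + 1) * N - m * δ * N ≤ (Texp : ℝ) := by
      rw [hcast]
      have h3 : ∑ i : Fin m, ((N : ℝ) + (n i : ℝ) - δ * N)
          ≤ ∑ i : Fin m, ((N : ℝ) + (n i : ℝ) - (⌊δ * (N : ℝ)⌋₊ : ℝ)) :=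
        Finset.sum_le_sum fun i _ => by linarith
      have h4 : ∑ i : Fin m, ((N : ℝ) + (n i : ℝ) - δ * N)
          = (m : ℝ) * N + N - m * (δ * N) := by
        rw [Finset.sum_sub_distrib, Finset.sum_add_distrib, Finset.sum_const,
          Finset.sum_const, Finset.card_univ, Fintype.card_fin, hsumn]
        push_cast
        ring
      linarith
    linarith
  -- cast of the half-integer term
  have hD2 : ((Sb * (m * (m + 1)) / 2 : ℕ) : ℝ) = (Sb : ℝ) * ((m : ℝ) * ((m : ℝ) + 1)) / 2 := by
    rw [Nat.cast_div (hdvd2.mul_left Sb) (by norm_num)]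
    push_cast
    ring
  -- goal 3
  have goal3 : (((Δ.roots.filter fun x => x ≠ 0).card : ℝ))
      ≤ (m : ℝ) * δ * N + (Sb : ℝ) * ((m : ℝ) * ((m : ℝ) + 1)) / 2 := by
    have hcard := auxRoots Δ hΔne
    have h1 : ((Δ.roots.filter fun x => x ≠ 0).card : ℝ)
        ≤ (Δ.natDegree : ℝ) - (Δ.natTrailingDegree : ℝ) := by
      have h2 : (Δ.natTrailingDegree) ≤ Δ.natDegree := natTrailingDegree_le_natDegree Δ
      have : ((Δ.natDegree - Δ.natTrailingDegree : ℕ) : ℝ)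
          = (Δ.natDegree : ℝ) - (Δ.natTrailingDegree : ℝ) := by
        rw [Nat.cast_sub h2]
      rw [← this]
      exact_mod_cast hcard
    have h3 : (Δ.natDegree : ℝ) ≤ ((m : ℝ) + 1) * N + (Sb : ℝ) * ((m : ℝ) * ((m : ℝ) + 1)) / 2 := by
      have := hdegΔ
      have h4 : ((Δ.natDegree : ℕ) : ℝ) ≤ (((m + 1) * N + Sb * (m * (m + 1)) / 2 : ℕ) : ℝ) := by
        exact_mod_cast this
      rw [Nat.cast_add, hD2] at h4
      push_cast at h4 ⊢
      linarith
    linarith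
  refine ⟨goal1, hdegΔ, goal3, ?_⟩
  -- goal 4
  intro a ha ρ hρ
  by_contra hcon
  push_neg at hcon
  -- hcon : ∀ k, bounds → Δ.eval (a * q ^ (-k)) = 0
  set L : ℝ := (ρ - m * δ) * N - (Sb : ℝ) * ((m : ℝ) * ((m : ℝ) + 1)) / 2 - 1 with hL
  set Ks : Finset ℤ := Finset.Ioc ⌊L⌋ ⌊ρ * (N : ℝ)⌋ with hKs
  have hmem : ∀ k ∈ Ks, L < (k : ℝ) ∧ (k : ℝ) ≤ ρ * N := by
    intro k hk
    rw [hKs, Finset.mem_Ioc] at hk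
    constructor
    · have : (⌊L⌋ : ℝ) + 1 ≤ (k : ℝ) := by exact_mod_cast hk.1
      have h2 := Int.lt_floor_add_one L
      linarith
    · have : (k : ℝ) ≤ (⌊ρ * (N : ℝ)⌋ : ℝ) := by exact_mod_cast hk.2
      exact this.trans (Int.floor_le _)
  have hroot : ∀ k ∈ Ks, Δ.eval (a * q ^ (-k)) = 0 := by
    intro k hk
    obtain ⟨h1, h2⟩ := hmem k hk
    exact hcon k h1 h2
  have hφinj : Function.Injective (fun k : ℤ => a * q ^ (-k)) := by
    intro k1 k2 h
    simp only at h
    have h2 : q ^ (-k1) = q ^ (-k2) := mul_left_cancel₀ ha h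
    have h3 : ‖q‖ ^ (-k1) = ‖q‖ ^ (-k2) := by
      rw [← norm_zpow, ← norm_zpow, h2]
    have h4 := (zpow_right_strictMono₀ hq).injective h3
    omega
  have hsub : Ks.image (fun k : ℤ => a * q ^ (-k))
      ⊆ (Δ.roots.filter fun x => x ≠ 0).toFinset := by
    intro x hx
    rw [Finset.mem_image] at hx
    obtain ⟨k, hk, rfl⟩ := hx
    rw [Multiset.mem_toFinset, Multiset.mem_filter]
    constructor
    · rw [Polynomial.mem_roots hΔne]
      exact hroot k hk
    · exact mul_ne_zero ha (zpow_ne_zero _ hq0)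
  have hcard1 : Ks.card ≤ (Δ.roots.filter fun x => x ≠ 0).card := by
    calc Ks.card = (Ks.image (fun k : ℤ => a * q ^ (-k))).card :=
          (Finset.card_image_of_injective Ks hφinj).symm
      _ ≤ (Δ.roots.filter fun x => x ≠ 0).toFinset.card := Finset.card_le_card hsub
      _ ≤ (Δ.roots.filter fun x => x ≠ 0).card := Multiset.toFinset_card_le _
  have hcard2 : (m : ℝ) * δ * N + (Sb : ℝ) * ((m : ℝ) * ((m : ℝ) + 1)) / 2
      < (Ks.card : ℝ) := by
    have h1 : (Ks.card : ℝ) = ((⌊ρ * (N : ℝ)⌋ - ⌊L⌋).toNat : ℝ) := by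
      rw [hKs, Int.card_Ioc]
    have h2 : ((⌊ρ * (N : ℝ)⌋ - ⌊L⌋ : ℤ) : ℝ) ≤ ((⌊ρ * (N : ℝ)⌋ - ⌊L⌋).toNat : ℝ) := by
      exact_mod_cast Int.self_le_toNat _
    have h3 : ρ * (N : ℝ) - 1 < (⌊ρ * (N : ℝ)⌋ : ℝ) := Int.sub_one_lt_floor _
    have h4 : (⌊L⌋ : ℝ) ≤ L := Int.floor_le L
    rw [h1]
    push_cast at h2
    rw [hL] at h4
    linarith [h2, h3, h4]
  have hfinal : ((Δ.roots.filter fun x => x ≠ 0).card : ℝ) < (Ks.card : ℝ) := by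
    linarith [goal3, hcard2]
  have : (Ks.card : ℝ) ≤ ((Δ.roots.filter fun x => x ≠ 0).card : ℝ) := by
    exact_mod_cast hcard1
  linarith
end

section
/- The nonvanishing of the integer determinant: with p_{jk} = D_k p̂_{jk} and q_{jik} = D_k q̂_{jik}, and k chosen with Δ(α q^{−k}) ≠ 0, one has det(p_{jk}, q_{j1k}, …, q_{jmk})_{j=0,…,m} = D_k^{m+1} X_k(α, q) (q^u α^s)^{mk} Δ(α q^{−k}) Π_{i=1}^{m} α_i^k ≠ 0. -/
open Finset

/-- the integer determinant formula.  With `p_{jk} = D_k p̂_{jk}`,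
`q_{jik} = D_k q̂_{jik}` (where `p̂_{jk} = A_j(αq^{−k}) X_k` and
`q̂_{jik} = (α_i α^s)^k q^{uk} B_{ji}(αq^{−k}) − A_j(αq^{−k}) Y_{ik}`), one has
`det(p_{jk}, q_{j1k}, …, q_{jmk}) = D_k^{m+1} X_k (q^u α^s)^{mk} Δ(αq^{−k}) Π_i α_i^k ≠ 0`.
Here `Av j`, `Bv j i` denote the values `A_j(αq^{−k})`, `B_{ji}(αq^{−k})` and
`Δval = det(Av j, Bv j i) = Δ(αq^{−k})`. -/
theorem stmt16 (q α : ℂ) (hq : 1 < ‖q‖) (hα : α ≠ 0)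
    (m s u k : ℕ) (hm : 0 < m)
    (αi : Fin m → ℂ) (hαi : ∀ i, αi i ≠ 0)
    (Dk Xk : ℂ) (hDk : Dk ≠ 0) (hXk : Xk ≠ 0)
    (Av : ℕ → ℂ) (Bv : ℕ → Fin m → ℂ) (Y : Fin m → ℂ)
    (hΔval : Matrix.det (Matrix.of fun j i : Fin (m + 1) =>
      (Fin.cases (Av (j : ℕ)) (fun i' => Bv (j : ℕ) i') i : ℂ)) ≠ 0) :
    Matrix.det (Matrix.of fun j i : Fin (m + 1) =>
        (Fin.cases (Dk * (Av (j : ℕ) * Xk))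
          (fun i' => Dk * ((αi i' * α ^ s) ^ k * q ^ (u * k) * Bv (j : ℕ) i'
            - Av (j : ℕ) * Y i')) i : ℂ))
      = Dk ^ (m + 1) * Xk * (q ^ u * α ^ s) ^ (m * k)
          * Matrix.det (Matrix.of fun j i : Fin (m + 1) =>
              (Fin.cases (Av (j : ℕ)) (fun i' => Bv (j : ℕ) i') i : ℂ))
          * ∏ i, (αi i) ^ k ∧
    Matrix.det (Matrix.of fun j i : Fin (m + 1) =>
        (Fin.cases (Dk * (Av (j : ℕ) * Xk))
          (fun i' => Dk * ((αi i' * α ^ s) ^ k * q ^ (u * k) * Bv (j : ℕ) i'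
            - Av (j : ℕ) * Y i')) i : ℂ)) ≠ 0 := by
  have hq0 : q ≠ 0 := by
    intro h; rw [h] at hq; simp at hq; linarith
  set Δmat : Matrix (Fin (m+1)) (Fin (m+1)) ℂ :=
    Matrix.of fun j i : Fin (m + 1) =>
      (Fin.cases (Av (j : ℕ)) (fun i' => Bv (j : ℕ) i') i : ℂ) with hΔ
  set C : Matrix (Fin (m+1)) (Fin (m+1)) ℂ :=
    Matrix.of fun l i : Fin (m+1) =>
      (Fin.cases
        (Fin.cases (Dk * Xk) (fun _ => 0) l)
        (fun i' => Fin.cases (-(Dk * Y i'))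
          (fun l' => if l' = i' then Dk * ((αi i' * α ^ s) ^ k * q ^ (u * k)) else 0) l)
        i : ℂ) with hC
  have hM : (Matrix.of fun j i : Fin (m + 1) =>
        (Fin.cases (Dk * (Av (j : ℕ) * Xk))
          (fun i' => Dk * ((αi i' * α ^ s) ^ k * q ^ (u * k) * Bv (j : ℕ) i'
            - Av (j : ℕ) * Y i')) i : ℂ)) = Δmat * C := by
    funext j i
    rw [Matrix.mul_apply]
    refine Fin.cases ?_ (fun i' => ?_) i
    · rw [Fin.sum_univ_succ]
      simp [hΔ, hC]
      ring
    · rw [Fin.sum_univ_succ]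
      simp [hΔ, hC, Finset.mul_sum]
      ring
  have hCt : C.BlockTriangular id := by
    intro l i hlt
    simp only [id] at hlt
    refine Fin.cases ?_ (fun i' hlt => ?_) i hlt
    · intro h
      obtain ⟨l', rfl⟩ := Fin.exists_succ_eq.mpr (Fin.pos_iff_ne_zero.mp h)
      simp [hC]
    · obtain ⟨l', rfl⟩ := Fin.exists_succ_eq.mpr
        (Fin.pos_iff_ne_zero.mp (lt_of_le_of_lt (Fin.zero_le _) hlt))
      have hne : l' ≠ i' := by
        intro h; subst h; exact lt_irrefl _ hlt
      simp [hC, hne]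
  have hdetC : C.det = Dk * Xk * ∏ i' : Fin m, (Dk * ((αi i' * α ^ s) ^ k * q ^ (u * k))) := by
    rw [Matrix.det_of_upperTriangular hCt, Fin.prod_univ_succ]
    simp [hC]
  have key : C.det = Dk ^ (m + 1) * Xk * (q ^ u * α ^ s) ^ (m * k) * ∏ i, (αi i) ^ k := by
    rw [hdetC]
    simp only [Finset.prod_mul_distrib, Finset.prod_const, Finset.card_univ,
      Fintype.card_fin, mul_pow, ← pow_mul]
    ring
  have hdet : (Δmat * C).det = Δmat.det * C.det := Matrix.det_mul _ _
  constructor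
  · rw [hM, hdet, key]; ring
  · rw [hM, hdet, key]
    refine mul_ne_zero hΔval (mul_ne_zero (mul_ne_zero (mul_ne_zero (pow_ne_zero _ hDk) hXk)
      (pow_ne_zero _ (mul_ne_zero (pow_ne_zero _ hq0) (pow_ne_zero _ hα)))) ?_)
    exact Finset.prod_ne_zero_iff.mpr fun i _ => pow_ne_zero _ (hαi i)
end
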